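/- For 1/4 < b < 1/2, and for all ξ₂ ∈ ℝ² with |ξ₂| ∼ N₁ ≫ 1 and all τ₂ ∈ ℝ, one has ∫_{|ξ|≲1} ⟨|ξ+ξ₂|² − |ξ₂|²⟩^{−(4b−1)} dξ ≲ N₁^{1−4b}, where the integral is over ξ ∈ ℝ². -/

import Mathlib

open MeasureTheory intervalIntegral

noncomputable def jb (x : ℝ) : ℝ := Real.sqrt (1 + x ^ 2)

lemma jb_one_le (x : ℝ) : 1 ≤ jb x := by
  rw [jb]
  exact Real.one_le_sqrt.2 (by nlinarith [sq_nonneg x])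

lemma jb_pos (x : ℝ) : 0 < jb x := lt_of_lt_of_le one_pos (jb_one_le x)

lemma jb_cont : Continuous jb := by
  unfold jb; fun_prop

lemma abs_le_jb (x : ℝ) : |x| ≤ jb x := by
  rw [jb, ← Real.sqrt_sq_eq_abs]
  exact Real.sqrt_le_sqrt (by nlinarith)

lemma jb_neg (x : ℝ) : jb (-x) = jb x := by simp [jb]

section g
variable {α : ℝ}

lemma g_nonneg (hα : 0 < α) (u : ℝ) : 0 ≤ jb u ^ (-α) := Real.rpow_nonneg (jb_pos u).le _

lemma g_le_one (hα : 0 < α) (u : ℝ) : jb u ^ (-α) ≤ 1 :=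
  Real.rpow_le_one_of_one_le_of_nonpos (jb_one_le u) (by linarith)

lemma g_cont (hα : 0 < α) : Continuous (fun u : ℝ => jb u ^ (-α)) :=
  jb_cont.rpow_const (fun x => Or.inl (jb_pos x).ne')

lemma g_le_rpow (hα : 0 < α) {u : ℝ} (hu : 1 ≤ u) : jb u ^ (-α) ≤ u ^ (-α) := by
  have h : u ≤ jb u := le_trans (le_abs_self u) (abs_le_jb u)
  exact Real.rpow_le_rpow_of_nonpos (by linarith) h (by linarith)

end g

lemma gInt {α : ℝ} (hα0 : 0 < α) (hα1 : α < 1) {M : ℝ} (hM : 1 ≤ M) :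
    ∫ u in (-M)..M, jb u ^ (-α) ≤ 2 + 2 * (M ^ (1 - α) / (1 - α)) := by
  have gi : ∀ a b : ℝ, IntervalIntegrable (fun u => jb u ^ (-α)) volume a b :=
    fun a b => (g_cont hα0).intervalIntegrable a b
  have h1 : (∫ u in (-M)..(-1:ℝ), jb u ^ (-α)) + ∫ u in (-1:ℝ)..M, jb u ^ (-α)
      = ∫ u in (-M)..M, jb u ^ (-α) := integral_add_adjacent_intervals (gi _ _) (gi _ _)
  have h2 : (∫ u in (-1:ℝ)..(1:ℝ), jb u ^ (-α)) + ∫ u in (1:ℝ)..M, jb u ^ (-α)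
      = ∫ u in (-1:ℝ)..M, jb u ^ (-α) := integral_add_adjacent_intervals (gi _ _) (gi _ _)
  have hneg : (∫ u in (-M)..(-1:ℝ), jb u ^ (-α)) = ∫ u in (1:ℝ)..M, jb u ^ (-α) := by
    rw [← intervalIntegral.integral_comp_neg (fun u => jb u ^ (-α))]
    simp [jb_neg]
  have hmid : (∫ u in (-1:ℝ)..(1:ℝ), jb u ^ (-α)) ≤ 2 := by
    calc (∫ u in (-1:ℝ)..(1:ℝ), jb u ^ (-α)) ≤ ∫ _ in (-1:ℝ)..(1:ℝ), (1:ℝ) := by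
          apply integral_mono_on (by norm_num) (gi _ _) (intervalIntegrable_const)
          exact fun x _ => g_le_one hα0 x
      _ = 2 := by simp; norm_num
  have htail : (∫ u in (1:ℝ)..M, jb u ^ (-α)) ≤ M ^ (1 - α) / (1 - α) := by
    have hrint : IntervalIntegrable (fun u : ℝ => u ^ (-α)) volume 1 M := by
      apply ContinuousOn.intervalIntegrable
      apply ContinuousOn.rpow_const continuousOn_id
      intro x hx
      rw [Set.uIcc_of_le hM] at hx
      exact Or.inl (by intro h; simp only [id_eq] at h; rw [h] at hx; linarith [hx.1])
    calc (∫ u in (1:ℝ)..M, jb u ^ (-α)) ≤ ∫ u in (1:ℝ)..M, u ^ (-α) := by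
          apply integral_mono_on hM (gi _ _) hrint
          exact fun x hx => g_le_rpow hα0 hx.1
      _ = (M ^ (-α + 1) - 1 ^ (-α + 1)) / (-α + 1) := integral_rpow (Or.inl (by linarith))
      _ ≤ M ^ (1 - α) / (1 - α) := by
          rw [Real.one_rpow, show -α + 1 = 1 - α by ring]
          gcongr
          · linarith
  rw [← h1, ← h2, hneg]
  linarith

lemma oneDim {α : ℝ} (hα0 : 0 < α) (hα1 : α < 1) {r c : ℝ} (hr : 2 ≤ r)
    (hc0 : 0 ≤ c) (hc1 : c ≤ 1) :
    ∫ x in (-1:ℝ)..1, jb (2*r*x + x^2 + c) ^ (-α) ≤ (2 + 6/(1-α)) * r ^ (-α) := by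
  have hr0 : (0:ℝ) < r := by linarith
  have h1α : (0:ℝ) < 1 - α := by linarith
  have hinv : (0:ℝ) ≤ (2*r-2)⁻¹ := inv_nonneg.2 (by linarith)
  have hφc : Continuous (fun x : ℝ => 2*r*x + x^2 + c) := by fun_prop
  have hgφ : Continuous (fun x : ℝ => jb (2*r*x + x^2 + c) ^ (-α)) := (g_cont hα0).comp hφc
  have hd : ∀ x ∈ Set.uIcc (-1:ℝ) 1, HasDerivAt (fun x : ℝ => 2*r*x + x^2 + c) (2*r + 2*x) x := by
    intro x _
    have h : HasDerivAt (fun x : ℝ => 2*r*x + x^2 + c) (2*r*1 + ↑2 * x ^ 1) x :=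
      (((hasDerivAt_id x).const_mul (2*r)).add (hasDerivAt_pow 2 x)).add_const c
    convert h using 1
    push_cast; ring
  have key : ∀ x ∈ Set.Icc (-1:ℝ) 1, jb (2*r*x + x^2 + c) ^ (-α)
      ≤ (2*r-2)⁻¹ * ((2*r + 2*x) * jb (2*r*x + x^2 + c) ^ (-α)) := by
    intro x hx
    have hg := g_nonneg hα0 (2*r*x + x^2 + c)
    have h2 : (0:ℝ) < 2*r-2 := by linarith
    have hmul : (2*r-2) * jb (2*r*x + x^2 + c) ^ (-α)
        ≤ (2*r + 2*x) * jb (2*r*x + x^2 + c) ^ (-α) :=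
      mul_le_mul_of_nonneg_right (by linarith [hx.1]) hg
    calc jb (2*r*x + x^2 + c) ^ (-α)
        = (2*r-2)⁻¹ * ((2*r-2) * jb (2*r*x + x^2 + c) ^ (-α)) := by
          rw [← mul_assoc, inv_mul_cancel₀ h2.ne', one_mul]
      _ ≤ _ := mul_le_mul_of_nonneg_left hmul hinv
  have step1 : (∫ x in (-1:ℝ)..1, jb (2*r*x + x^2 + c) ^ (-α))
      ≤ (2*r-2)⁻¹ * ∫ x in (-1:ℝ)..1, (2*r + 2*x) * jb (2*r*x + x^2 + c) ^ (-α) := by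
    rw [← intervalIntegral.integral_const_mul]
    apply integral_mono_on (by norm_num) (hgφ.intervalIntegrable _ _) _ key
    exact (continuous_const.mul (((by fun_prop : Continuous fun x:ℝ => 2*r+2*x)).mul hgφ)).intervalIntegrable _ _
  have step2 : (∫ x in (-1:ℝ)..1, (2*r + 2*x) * jb (2*r*x + x^2 + c) ^ (-α))
      = ∫ u in (2*r*(-1) + (-1)^2 + c)..(2*r*1 + 1^2 + c), jb u ^ (-α) := by
    have h := integral_comp_smul_deriv hd
      (by fun_prop : ContinuousOn (fun x:ℝ => 2*r+2*x) (Set.uIcc (-1:ℝ) 1)) (g_cont hα0)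
    simpa [smul_eq_mul] using h
  have step3 : (∫ u in (2*r*(-1) + (-1)^2 + c)..(2*r*1 + 1^2 + c), jb u ^ (-α))
      ≤ ∫ u in (-(3*r))..(3*r), jb u ^ (-α) := by
    apply integral_mono_interval (by nlinarith) (by nlinarith) (by nlinarith)
    · exact ae_of_all _ (fun u => g_nonneg hα0 u)
    · exact (g_cont hα0).intervalIntegrable _ _
  have hpos : (0:ℝ) ≤ 2 + 2 * ((3*r)^(1-α)/(1-α)) := by
    have : (0:ℝ) ≤ (3*r)^(1-α)/(1-α) := div_nonneg (Real.rpow_nonneg (by linarith) _) h1α.le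
    linarith
  have hA : (3*r) ^ (1-α) ≤ 3 * r ^ (1-α) := by
    rw [Real.mul_rpow (by norm_num) hr0.le]
    have h3 : (3:ℝ) ^ (1-α) ≤ 3 := by
      calc (3:ℝ) ^ (1-α) ≤ 3 ^ (1:ℝ) :=
            Real.rpow_le_rpow_of_exponent_le (by norm_num) (by linarith)
        _ = 3 := Real.rpow_one 3
    exact mul_le_mul_of_nonneg_right h3 (Real.rpow_nonneg hr0.le _)
  have hB : (2*r-2)⁻¹ ≤ r⁻¹ := inv_anti₀ hr0 (by linarith)
  have hC : r⁻¹ ≤ r ^ (-α) := by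
    rw [← Real.rpow_neg_one]
    exact Real.rpow_le_rpow_of_exponent_le (by linarith) (by linarith)
  have hD : r⁻¹ * r ^ (1-α) = r ^ (-α) := by
    rw [← Real.rpow_neg_one r, ← Real.rpow_add hr0]
    ring_nf
  calc (∫ x in (-1:ℝ)..1, jb (2*r*x + x^2 + c) ^ (-α))
      ≤ (2*r-2)⁻¹ * ∫ x in (-1:ℝ)..1, (2*r + 2*x) * jb (2*r*x + x^2 + c) ^ (-α) := step1
    _ = (2*r-2)⁻¹ * ∫ u in (2*r*(-1) + (-1)^2 + c)..(2*r*1 + 1^2 + c), jb u ^ (-α) := by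
        rw [step2]
    _ ≤ (2*r-2)⁻¹ * ∫ u in (-(3*r))..(3*r), jb u ^ (-α) := mul_le_mul_of_nonneg_left step3 hinv
    _ ≤ (2*r-2)⁻¹ * (2 + 2 * ((3*r)^(1-α)/(1-α))) :=
        mul_le_mul_of_nonneg_left (gInt hα0 hα1 (by linarith)) hinv
    _ ≤ r⁻¹ * (2 + 2 * ((3*r)^(1-α)/(1-α))) := mul_le_mul_of_nonneg_right hB hpos
    _ ≤ r⁻¹ * (2 + 2 * ((3 * r^(1-α))/(1-α))) := by
        apply mul_le_mul_of_nonneg_left _ (inv_nonneg.2 hr0.le)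
        gcongr
    _ = 2*r⁻¹ + (6/(1-α)) * (r⁻¹ * r^(1-α)) := by ring
    _ = 2*r⁻¹ + (6/(1-α)) * r^(-α) := by rw [hD]
    _ ≤ 2*r^(-α) + (6/(1-α)) * r^(-α) := by
        have := hC
        nlinarith [hC]
    _ = (2 + 6/(1-α)) * r ^ (-α) := by ring

lemma twoDim {α : ℝ} (hα0 : 0 < α) (hα1 : α < 1) {r : ℝ} (hr : 2 ≤ r) :
    (∫ p in {p : ℝ × ℝ | p.1^2 + p.2^2 ≤ 1}, jb (2*r*p.2 + p.2^2 + p.1^2) ^ (-α))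
      ≤ 2 * ((2 + 6/(1-α)) * r ^ (-α)) := by
  set Q : Set (ℝ × ℝ) := Set.Icc (-1:ℝ) 1 ×ˢ Set.Icc (-1:ℝ) 1 with hQ
  have hFc : Continuous (fun p : ℝ × ℝ => jb (2*r*p.2 + p.2^2 + p.1^2) ^ (-α)) :=
    (g_cont hα0).comp (by fun_prop)
  have hQint : IntegrableOn (fun p : ℝ × ℝ => jb (2*r*p.2 + p.2^2 + p.1^2) ^ (-α)) Q :=
    hFc.continuousOn.integrableOn_compact (isCompact_Icc.prod isCompact_Icc)
  have hsub : {p : ℝ × ℝ | p.1^2 + p.2^2 ≤ 1} ⊆ Q := by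
    rintro ⟨x, y⟩ h
    simp only [Set.mem_setOf_eq] at h
    refine ⟨⟨?_, ?_⟩, ⟨?_, ?_⟩⟩ <;> nlinarith [sq_nonneg x, sq_nonneg y]
  have step0 : (∫ p in {p : ℝ × ℝ | p.1^2 + p.2^2 ≤ 1}, jb (2*r*p.2 + p.2^2 + p.1^2) ^ (-α))
      ≤ ∫ p in Q, jb (2*r*p.2 + p.2^2 + p.1^2) ^ (-α) :=
    setIntegral_mono_set hQint (ae_of_all _ (fun p => g_nonneg hα0 _))
      (HasSubset.Subset.eventuallyLE hsub)
  have hK : (0:ℝ) ≤ (2 + 6/(1-α)) * r ^ (-α) := by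
    have h1 : (0:ℝ) ≤ 6/(1-α) := div_nonneg (by norm_num) (by linarith)
    have h2 : (0:ℝ) ≤ r ^ (-α) := Real.rpow_nonneg (by linarith) _
    nlinarith
  have inner : ∀ x ∈ Set.Icc (-1:ℝ) 1,
      (∫ y in Set.Icc (-1:ℝ) 1, jb (2*r*y + y^2 + x^2) ^ (-α)) ≤ (2 + 6/(1-α)) * r ^ (-α) := by
    intro x hx
    have hx2 : x^2 ≤ 1 := by nlinarith [hx.1, hx.2]
    have : (∫ y in Set.Icc (-1:ℝ) 1, jb (2*r*y + y^2 + x^2) ^ (-α))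
        = ∫ y in (-1:ℝ)..1, jb (2*r*y + y^2 + x^2) ^ (-α) := by
      rw [intervalIntegral.integral_of_le (by norm_num), integral_Icc_eq_integral_Ioc]
    rw [this]
    exact oneDim hα0 hα1 hr (sq_nonneg x) hx2
  have innernn : ∀ x : ℝ, 0 ≤ ∫ y in Set.Icc (-1:ℝ) 1, jb (2*r*y + y^2 + x^2) ^ (-α) :=
    fun x => setIntegral_nonneg measurableSet_Icc (fun y _ => g_nonneg hα0 _)
  have fub : (∫ p in Q, jb (2*r*p.2 + p.2^2 + p.1^2) ^ (-α))
      = ∫ x in Set.Icc (-1:ℝ) 1, ∫ y in Set.Icc (-1:ℝ) 1, jb (2*r*y + y^2 + x^2) ^ (-α) := by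
    rw [hQ, Measure.volume_eq_prod]
    rw [Measure.volume_eq_prod] at hQint
    exact setIntegral_prod _ hQint
  have outer : (∫ x in Set.Icc (-1:ℝ) 1,
      ∫ y in Set.Icc (-1:ℝ) 1, jb (2*r*y + y^2 + x^2) ^ (-α))
      ≤ ((2 + 6/(1-α)) * r ^ (-α)) * 2 := by
    have h := norm_setIntegral_le_of_norm_le_const (μ := volume)
      (s := Set.Icc (-1:ℝ) 1) (C := (2 + 6/(1-α)) * r ^ (-α))
      (by rw [Real.volume_Icc]; norm_num)
      (fun x hx => by
        rw [Real.norm_eq_abs, abs_of_nonneg (innernn x)]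
        exact inner x hx)
    have hv : (volume (Set.Icc (-1:ℝ) 1)).toReal = 2 := by
      rw [Real.volume_Icc]; norm_num
    rw [measureReal_def, hv] at h
    calc _ ≤ ‖∫ x in Set.Icc (-1:ℝ) 1,
        ∫ y in Set.Icc (-1:ℝ) 1, jb (2*r*y + y^2 + x^2) ^ (-α)‖ := le_abs_self _
      _ ≤ _ := h
  calc _ ≤ _ := step0
    _ = _ := fub
    _ ≤ ((2 + 6/(1-α)) * r ^ (-α)) * 2 := outer
    _ = 2 * ((2 + 6/(1-α)) * r ^ (-α)) := by ring

open EuclideanSpace in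
lemma transfer (α : ℝ) (ξ₂ : EuclideanSpace ℝ (Fin 2)) (hξ : ξ₂ ≠ 0) :
    (∫ ξ in {ξ : EuclideanSpace ℝ (Fin 2) | ‖ξ‖ ≤ 1}, jb (‖ξ + ξ₂‖ ^ 2 - ‖ξ₂‖ ^ 2) ^ (-α))
      = ∫ p in {p : ℝ × ℝ | p.1^2 + p.2^2 ≤ 1},
          jb (2*‖ξ₂‖*p.2 + p.2^2 + p.1^2) ^ (-α) := by
  set r : ℝ := ‖ξ₂‖ with hrdef
  have hr0 : (0:ℝ) < r := norm_pos_iff.2 hξ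
  set v : EuclideanSpace ℝ (Fin 2) := r⁻¹ • ξ₂ with hvdef
  have hv : ‖v‖ = 1 := by
    rw [hvdef, norm_smul, norm_inv, norm_norm, ← hrdef, inv_mul_cancel₀ hr0.ne']
  have hON : Orthonormal ℝ (Set.restrict {1} (fun _ : Fin 2 => v)) := by
    rw [orthonormal_iff_ite]
    intro i j
    have hij : i = j := Subtype.ext (i.2.trans j.2.symm)
    subst hij
    simp only [if_pos rfl, Set.restrict_apply]
    rw [real_inner_self_eq_norm_sq]; show ‖v‖ ^ 2 = _; rw [hv]; norm_num
  obtain ⟨b, hb⟩ := hON.exists_orthonormalBasis_extension_of_card_eq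
    (by simp [finrank_euclideanSpace_fin])
  have hb1 : b 1 = v := hb 1 rfl
  set T : ℝ × ℝ → EuclideanSpace ℝ (Fin 2) :=
    (b.repr.symm : EuclideanSpace ℝ (Fin 2) → EuclideanSpace ℝ (Fin 2)) ∘
      ((MeasurableEquiv.toLp 2 (Fin 2 → ℝ)) ∘
        (MeasurableEquiv.finTwoArrow (α := ℝ)).symm) with hTdef
  have hT : MeasurePreserving T volume volume :=
    (b.measurePreserving_repr_symm).comp
      (((EuclideanSpace.volume_preserving_symm_measurableEquiv_toLp (Fin 2)).symm _).comp
        ((volume_preserving_finTwoArrow ℝ).symm _))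
  have hTemb : MeasurableEmbedding T :=
    (b.repr.symm.toHomeomorph.measurableEmbedding).comp
      (((MeasurableEquiv.toLp 2 (Fin 2 → ℝ)).measurableEmbedding).comp
        ((MeasurableEquiv.finTwoArrow (α := ℝ)).symm.measurableEmbedding))
  -- coordinates of the middle point
  have hx01 : ∀ p : ℝ × ℝ,
      ((MeasurableEquiv.toLp 2 (Fin 2 → ℝ))
        ((MeasurableEquiv.finTwoArrow (α := ℝ)).symm p)) = WithLp.toLp 2 ![p.1, p.2] := by
    intro p
    rfl
  have hnormT : ∀ p : ℝ × ℝ, ‖T p‖^2 = p.1^2 + p.2^2 := by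
    intro p
    rw [hTdef]
    simp only [Function.comp_apply, LinearIsometryEquiv.norm_map, hx01]
    rw [EuclideanSpace.norm_eq]
    rw [Real.sq_sqrt (by positivity)]
    simp [Fin.sum_univ_two]
  have hinnerT : ∀ p : ℝ × ℝ, (inner ℝ (T p) ξ₂ : ℝ) = r * p.2 := by
    intro p
    have hξ₂ : ξ₂ = r • b 1 := by
      rw [hb1, hvdef, smul_smul, mul_inv_cancel₀ hr0.ne', one_smul]
    rw [hTdef]
    simp only [Function.comp_apply]
    conv_lhs => rw [hξ₂, ← b.repr.symm_apply_apply (r • b 1)]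
    rw [b.repr.symm.inner_map_map]
    rw [_root_.map_smul, OrthonormalBasis.repr_self]
    rw [real_inner_smul_right, EuclideanSpace.inner_single_right]
    rw [hx01]
    norm_num
  have main := hT.setIntegral_preimage_emb hTemb
    (fun ξ => jb (‖ξ + ξ₂‖ ^ 2 - ‖ξ₂‖ ^ 2) ^ (-α)) {ξ : EuclideanSpace ℝ (Fin 2) | ‖ξ‖ ≤ 1}
  rw [← main]
  have hset : T ⁻¹' {ξ : EuclideanSpace ℝ (Fin 2) | ‖ξ‖ ≤ 1}
      = {p : ℝ × ℝ | p.1^2 + p.2^2 ≤ 1} := by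
    ext p
    simp only [Set.mem_preimage, Set.mem_setOf_eq]
    rw [← hnormT p]
    constructor
    · intro h; nlinarith [norm_nonneg (T p)]
    · intro h; nlinarith [norm_nonneg (T p)]
  rw [hset]
  apply MeasureTheory.integral_congr_ae
  apply Filter.Eventually.of_forall
  intro p
  have harg : ‖T p + ξ₂‖ ^ 2 - ‖ξ₂‖ ^ 2 = 2*r*p.2 + p.2^2 + p.1^2 := by
    rw [norm_add_sq_real, hnormT p, hinnerT p, ← hrdef]
    ring
  simp only [harg]

theorem stmt14 (b : ℝ) (hb1 : 1 / 4 < b) (hb2 : b < 1 / 2) :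
    ∃ C > 0, ∀ N₁ : ℝ, 1 ≤ N₁ → ∀ ξ₂ : EuclideanSpace ℝ (Fin 2),
      N₁ / 2 ≤ ‖ξ₂‖ → ‖ξ₂‖ ≤ 2 * N₁ →
      (∫ ξ in {ξ : EuclideanSpace ℝ (Fin 2) | ‖ξ‖ ≤ 1},
          (jb (‖ξ + ξ₂‖ ^ 2 - ‖ξ₂‖ ^ 2)) ^ (-(4 * b - 1))) ≤ C * N₁ ^ (1 - 4 * b) := by
  set α : ℝ := 4 * b - 1 with hα
  have hα0 : 0 < α := by rw [hα]; linarith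
  have hα1 : α < 1 := by rw [hα]; linarith
  set K : ℝ := 2 + 6 / (1 - α) with hK
  have hK0 : 0 < K := by
    have : (0:ℝ) ≤ 6 / (1 - α) := div_nonneg (by norm_num) (by linarith)
    rw [hK]; linarith
  set V : ℝ := (volume {p : ℝ × ℝ | p.1^2 + p.2^2 ≤ 1}).toReal with hV
  have hV0 : 0 ≤ V := ENNReal.toReal_nonneg
  have hsub : {p : ℝ × ℝ | p.1^2 + p.2^2 ≤ 1} ⊆ Set.Icc (-1:ℝ) 1 ×ˢ Set.Icc (-1:ℝ) 1 := by
    rintro ⟨x, y⟩ h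
    simp only [Set.mem_setOf_eq] at h
    refine ⟨⟨?_, ?_⟩, ⟨?_, ?_⟩⟩ <;> nlinarith [sq_nonneg x, sq_nonneg y]
  have hfin : volume {p : ℝ × ℝ | p.1^2 + p.2^2 ≤ 1} < ⊤ :=
    lt_of_le_of_lt (measure_mono hsub) (isCompact_Icc.prod isCompact_Icc).measure_lt_top
  have hmeas : MeasurableSet {p : ℝ × ℝ | p.1^2 + p.2^2 ≤ 1} :=
    (isClosed_le (by fun_prop) continuous_const).measurableSet
  refine ⟨4*V + 4*K, by linarith, ?_⟩
  intro N₁ hN₁ ξ₂ hl hu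
  have hξ : ξ₂ ≠ 0 := by
    intro h
    rw [h, norm_zero] at hl
    linarith
  have hNα : (1:ℝ)/4 ≤ N₁ ^ (-α) ∨ True := Or.inr trivial
  have hexp : (1 - 4*b) = -α := by rw [hα]; ring
  rw [hexp, transfer α ξ₂ hξ]
  have hNpos : (0:ℝ) < N₁ := by linarith
  have hNαpos : (0:ℝ) ≤ N₁ ^ (-α) := Real.rpow_nonneg hNpos.le _
  rcases le_or_gt N₁ 4 with hsmall | hbig
  · -- small N₁ : bound integral by V
    have hb1' : (∫ p in {p : ℝ × ℝ | p.1^2 + p.2^2 ≤ 1},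
        jb (2*‖ξ₂‖*p.2 + p.2^2 + p.1^2) ^ (-α)) ≤ 1 * V := by
      calc _ ≤ ‖∫ p in {p : ℝ × ℝ | p.1^2 + p.2^2 ≤ 1},
            jb (2*‖ξ₂‖*p.2 + p.2^2 + p.1^2) ^ (-α)‖ := le_abs_self _
        _ ≤ 1 * V := norm_setIntegral_le_of_norm_le_const hfin
            (fun p _ => by
              rw [Real.norm_eq_abs, abs_of_nonneg (g_nonneg hα0 _)]
              exact g_le_one hα0 _)
    have h14 : (1:ℝ)/4 ≤ N₁ ^ (-α) := by
      have e1 : (4:ℝ) ^ (-(1:ℝ)) ≤ (4:ℝ) ^ (-α) :=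
        Real.rpow_le_rpow_of_exponent_le (by norm_num) (by linarith)
      have e2 : (4:ℝ) ^ (-α) ≤ N₁ ^ (-α) :=
        Real.rpow_le_rpow_of_nonpos hNpos hsmall (by linarith)
      rw [Real.rpow_neg_one] at e1
      norm_num at e1
      linarith
    nlinarith
  · -- big N₁ : main estimate
    have hr2 : (2:ℝ) ≤ ‖ξ₂‖ := by linarith
    have h2d := twoDim hα0 hα1 hr2
    have er : ‖ξ₂‖ ^ (-α) ≤ (N₁/2) ^ (-α) :=
      Real.rpow_le_rpow_of_nonpos (by linarith) hl (by linarith)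
    have ed : (N₁/2 : ℝ) ^ (-α) = N₁ ^ (-α) * (2:ℝ) ^ α := by
      rw [Real.div_rpow hNpos.le (by norm_num), Real.rpow_neg (by norm_num : (0:ℝ) ≤ 2)]
      field_simp

    have e2α : (2:ℝ) ^ (α:ℝ) ≤ 2 := by
      calc (2:ℝ) ^ (α:ℝ) ≤ (2:ℝ) ^ (1:ℝ) :=
            Real.rpow_le_rpow_of_exponent_le (by norm_num) (by linarith)
        _ = 2 := Real.rpow_one 2
    have hrα : (0:ℝ) ≤ ‖ξ₂‖ ^ (-α) := Real.rpow_nonneg (norm_nonneg _) _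
    have : ‖ξ₂‖ ^ (-α) ≤ 2 * N₁ ^ (-α) := by
      rw [ed] at er
      nlinarith
    calc (∫ p in {p : ℝ × ℝ | p.1^2 + p.2^2 ≤ 1},
          jb (2*‖ξ₂‖*p.2 + p.2^2 + p.1^2) ^ (-α)) ≤ 2 * (K * ‖ξ₂‖ ^ (-α)) := by
            rw [hK]; exact h2d
      _ ≤ 2 * (K * (2 * N₁ ^ (-α))) := by
            have h := mul_le_mul_of_nonneg_left this hK0.le
            linarith
      _ = 4*K*N₁^(-α) := by ring
      _ ≤ (4*V+4*K) * N₁^(-α) := by nlinarith
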